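/- arXiv:1102.2904 — 2 statements merged into one kernel-verified Lean document; each statement's English description precedes it below -/
import Mathlib

section
/- (Lemma 1, lower bound) In the symmetric model, the no-interference average rate satisfies R_up(n) ≥ log₂(ρ·log n) − log₂(log n)/log n + o(log(log n)/log n); that is, there is a function h with h(n)·log n/log(log n) → 0 such that for all sufficiently large n, E[log₂(1+α^up_n)] ≥ log₂(ρ·log n) − log₂(log n)/log n + h(n). -/
open MeasureTheory ProbabilityTheory Filter Real

/-- The maximum of `f k` over the indices `k ∈ {1, …, n}`. -/
noncomputable def maxIcc (n : ℕ) (f : ℕ → ℝ) : ℝ :=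
  ⨆ k : (Finset.Icc 1 n : Finset ℕ), f k

/-!
If one of the `n` i.i.d. `Exp(1)` signal gains exceeds `t = log n - log log n`, then
`log₂(1 + α^up_n) ≥ log₂(1 + ρ t)`. This happens with probability `1 - (1 - log n / n)^n ≥ 1 - 1/n`,
so Markov's inequality bounds the rate below by `log₂(1 + ρ t) (1 - 1/n)`. Writing
`1 + ρ t = ρ log n (1 + u)` with `u = 1/(ρ log n) - log log n / log n`, the expansion
`log (1 + u) = u + o(u)` shows that this bound differs from `log₂(ρ log n) - log₂(log n) / log n`
by `o(log log n / log n)`.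
-/

open Asymptotics Topology

section maxIcc

variable {n k : ℕ} {f : ℕ → ℝ}

lemma le_maxIcc (hk : k ∈ Finset.Icc 1 n) : f k ≤ maxIcc n f :=
  le_ciSup (f := fun i : (Finset.Icc 1 n : Finset ℕ) => f i) (Set.finite_range _).bddAbove ⟨k, hk⟩

lemma maxIcc_nonneg (hf : ∀ k, 0 ≤ f k) : 0 ≤ maxIcc n f :=
  Real.iSup_nonneg fun _ => hf _

lemma maxIcc_le_sum (hf : ∀ k, 0 ≤ f k) : maxIcc n f ≤ ∑ k ∈ Finset.Icc 1 n, f k :=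
  Real.iSup_le (fun i => Finset.single_le_sum (fun k _ => hf k) i.2)
    (Finset.sum_nonneg fun k _ => hf k)

lemma integrable_maxIcc {Ω : Type*} [MeasurableSpace Ω] {P : Measure Ω} {X : ℕ → Ω → ℝ}
    (hX : ∀ k, Integrable (X k) P) (hX0 : ∀ᵐ ω ∂P, ∀ k, 0 ≤ X k ω) :
    Integrable (fun ω => maxIcc n fun k => X k ω) P := by
  refine Integrable.mono' (integrable_finsetSum (Finset.Icc 1 n) fun k _ => hX k)
    (AEMeasurable.iSup fun _ => (hX _).aemeasurable).aestronglyMeasurable ?_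
  filter_upwards [hX0] with ω hω
  rw [norm_of_nonneg (maxIcc_nonneg hω)]
  exact maxIcc_le_sum hω

end maxIcc

section Exponential

variable {r : ℝ}

lemma expMeasure_eq_withDensity : expMeasure r = volume.withDensity (exponentialPDF r) := rfl

lemma ae_nonneg_expMeasure : ∀ᵐ x ∂expMeasure r, 0 ≤ x := by
  simp only [ae_iff, not_le, expMeasure_eq_withDensity]
  change (volume.withDensity _) (Set.Iio 0) = 0
  rw [withDensity_apply _ measurableSet_Iio]
  exact lintegral_exponentialPDF_of_nonpos le_rfl

lemma integrable_id_expMeasure (hr : 0 < r) : Integrable (fun x => x) (expMeasure r) := by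
  rw [expMeasure_eq_withDensity, integrable_withDensity_iff (f := exponentialPDF r)
    (measurable_exponentialPDFReal r).ennreal_ofReal
    (ae_of_all _ fun _ => ENNReal.ofReal_lt_top)]
  have hIoi := (integrableOn_rpow_mul_exp_neg_mul_rpow (s := 1) (p := 1) (by norm_num) one_pos
    hr).const_mul r
  refine ((integrable_indicator_iff measurableSet_Ioi).2 hIoi).congr (ae_of_all _ fun x => ?_)
  rcases le_or_gt x 0 with hx | hx
  · rcases hx.lt_or_eq with hx | rfl
    · simp [Set.indicator_of_notMem (Set.notMem_Ioi.2 hx.le), exponentialPDF_of_neg hx]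
    · simp
  · simp [Set.indicator_of_mem (Set.mem_Ioi.2 hx), exponentialPDF_of_nonneg hx.le,
      ENNReal.toReal_ofReal (by positivity : 0 ≤ r * exp (-(r * x)))]
    ring

lemma measureReal_Iic_expMeasure (hr : 0 < r) {x : ℝ} (hx : 0 ≤ x) :
    (expMeasure r).real (Set.Iic x) = 1 - exp (-(r * x)) := by
  have := isProbabilityMeasure_expMeasure hr
  rw [← cdf_eq_real, cdf_expMeasure_eq hr, if_pos hx]

variable {Ω : Type*} [MeasurableSpace Ω] {P : Measure Ω} {X : Ω → ℝ}

lemma ae_nonneg_of_map_eq_expMeasure (hX : Measurable X) (hlaw : P.map X = expMeasure r) :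
    ∀ᵐ ω ∂P, 0 ≤ X ω :=
  ae_of_ae_map hX.aemeasurable (hlaw ▸ ae_nonneg_expMeasure)

lemma integrable_of_map_eq_expMeasure (hr : 0 < r) (hX : Measurable X)
    (hlaw : P.map X = expMeasure r) : Integrable X P :=
  (integrable_map_measure aestronglyMeasurable_id hX.aemeasurable).1
    (hlaw ▸ integrable_id_expMeasure hr)

lemma measureReal_le_of_map_eq_expMeasure (hr : 0 < r) (hX : Measurable X)
    (hlaw : P.map X = expMeasure r) {t : ℝ} (ht : 0 ≤ t) :
    P.real {ω | X ω ≤ t} = 1 - exp (-(r * t)) := by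
  rw [← measureReal_Iic_expMeasure hr ht, ← hlaw, map_measureReal_apply hX measurableSet_Iic]
  rfl

end Exponential

noncomputable def rateBound (c x : ℝ) : ℝ :=
  logb 2 (1 + c * (log x - log (log x))) * (1 - 1 / x)

section MaxOfExponentials

variable {Ω : Type*} [MeasurableSpace Ω] {P : Measure Ω}

lemma ProbabilityTheory.iIndepFun.measureReal_forall_le {ι : Type*} {X : ι → Ω → ℝ}
    (hX : iIndepFun X P) (s : Finset ι) {t q : ℝ} (hq : ∀ i ∈ s, P.real {ω | X i ω ≤ t} = q) :
    P.real {ω | ∀ i ∈ s, X i ω ≤ t} = q ^ s.card := by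
  have hset : {ω | ∀ i ∈ s, X i ω ≤ t} = ⋂ i ∈ s, X i ⁻¹' Set.Iic t := by ext; simp
  rw [hset, measureReal_def, hX.meas_biInter fun i _ => ⟨Set.Iic t, measurableSet_Iic, rfl⟩,
    ENNReal.toReal_prod, ← Finset.prod_const, Finset.prod_congr rfl fun i hi => ?_]
  rw [← hq i hi]
  rfl

lemma MeasureTheory.Integrable.logb_one_add {Y : Ω → ℝ} (hY : Integrable Y P) (hY0 : 0 ≤ᵐ[P] Y)
    (b : ℝ) : Integrable (fun ω => logb b (1 + Y ω)) P := by
  refine (Integrable.mono hY ((by fun_prop : Measurable fun y : ℝ => log (1 + y)).comp_aemeasurable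
    hY.aemeasurable).aestronglyMeasurable ?_).div_const (log b)
  filter_upwards [hY0] with ω (hω : 0 ≤ Y ω)
  rw [Function.comp_apply, norm_of_nonneg (log_nonneg (by linarith)), norm_of_nonneg hω]
  linarith [log_le_sub_one_of_pos (by linarith : 0 < 1 + Y ω)]

variable {X : ℕ → Ω → ℝ} {r : ℝ}

theorem mul_one_sub_pow_le_integral_logb_one_add_maxIcc [IsProbabilityMeasure P]
    (hr : 0 < r) (hXm : ∀ k, Measurable (X k)) (hX : iIndepFun X P)
    (hlaw : ∀ k, P.map (X k) = expMeasure r) {c t : ℝ} (hc : 0 ≤ c) (ht : 0 ≤ t) (n : ℕ) :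
    logb 2 (1 + c * t) * (1 - (1 - exp (-(r * t))) ^ n)
      ≤ ∫ ω, logb 2 (1 + maxIcc n fun k => c * X k ω) ∂P := by
  set Y : Ω → ℝ := fun ω => maxIcc n fun k => c * X k ω
  have hcX0 : ∀ᵐ ω ∂P, ∀ k, 0 ≤ c * X k ω := by
    filter_upwards [ae_all_iff.2 fun k => ae_nonneg_of_map_eq_expMeasure (hXm k) (hlaw k)]
      with ω hω k using mul_nonneg hc (hω k)
  have hY0 : 0 ≤ᵐ[P] Y := by
    filter_upwards [hcX0] with ω hω using maxIcc_nonneg hω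
  have hYint : Integrable Y P := integrable_maxIcc
    (fun k => (integrable_of_map_eq_expMeasure hr (hXm k) (hlaw k)).const_mul c) hcX0
  have hmeas : MeasurableSet {ω | ∀ k ∈ Finset.Icc 1 n, X k ω ≤ t} := by
    simp only [Set.ofPred_forall]
    exact Finset.measurableSet_biInter _ fun k _ => measurableSet_le (hXm k) measurable_const
  have hsub : {ω | ∀ k ∈ Finset.Icc 1 n, X k ω ≤ t}ᶜ
      ⊆ {ω | logb 2 (1 + c * t) ≤ logb 2 (1 + Y ω)} := by
    intro ω hω
    have hω : ¬∀ k ∈ Finset.Icc 1 n, X k ω ≤ t := hω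
    push Not at hω
    obtain ⟨k, hk, hlt⟩ := hω
    have : c * t ≤ Y ω :=
      (mul_le_mul_of_nonneg_left hlt.le hc).trans (le_maxIcc (f := fun k => c * X k ω) hk)
    exact logb_le_logb_of_le one_lt_two (by positivity) (by linarith)
  calc logb 2 (1 + c * t) * (1 - (1 - exp (-(r * t))) ^ n)
      = logb 2 (1 + c * t) * P.real {ω | ∀ k ∈ Finset.Icc 1 n, X k ω ≤ t}ᶜ := by
        rw [probReal_compl_eq_one_sub hmeas, hX.measureReal_forall_le _ fun k _ =>
          measureReal_le_of_map_eq_expMeasure hr (hXm k) (hlaw k) ht, Nat.card_Icc,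
          Nat.add_sub_cancel]
    _ ≤ logb 2 (1 + c * t) * P.real {ω | logb 2 (1 + c * t) ≤ logb 2 (1 + Y ω)} :=
        mul_le_mul_of_nonneg_left (measureReal_mono hsub)
          (logb_nonneg one_lt_two (by nlinarith))
    _ ≤ ∫ ω, logb 2 (1 + Y ω) ∂P := by
        refine mul_meas_ge_le_integral_of_nonneg ?_ (hYint.logb_one_add hY0 2) _
        filter_upwards [hY0] with ω (hω : 0 ≤ Y ω)
        exact logb_nonneg one_lt_two (by linarith)

theorem rateBound_le_integral_logb_one_add_maxIcc [IsProbabilityMeasure P]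
    (hXm : ∀ k, Measurable (X k)) (hX : iIndepFun X P)
    (hlaw : ∀ k, P.map (X k) = expMeasure 1) {c : ℝ} (hc : 0 ≤ c) {n : ℕ} (hn : 2 ≤ n) :
    rateBound c n ≤ ∫ ω, logb 2 (1 + maxIcc n fun k => c * X k ω) ∂P := by
  have hn0 : (0 : ℝ) < n := by positivity
  have hL : 0 < log n := log_pos (by exact_mod_cast hn)
  have ht : 0 ≤ log n - log (log n) := by linarith [log_le_sub_one_of_pos hL]
  have hexp : exp (-(1 * (log n - log (log n)))) = log n / n := by
    rw [one_mul, neg_sub, exp_sub, exp_log hL, exp_log hn0]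
  have hpow : (1 - log n / n) ^ n ≤ 1 / n := by
    calc (1 - log n / n) ^ n ≤ exp (-log n) :=
          one_sub_div_pow_le_exp_neg (by linarith [log_le_sub_one_of_pos hn0])
      _ = 1 / n := by rw [exp_neg, exp_log hn0, one_div]
  refine le_trans ?_ (mul_one_sub_pow_le_integral_logb_one_add_maxIcc one_pos hXm hX hlaw hc ht n)
  rw [rateBound, hexp]
  exact mul_le_mul_of_nonneg_left (by linarith) (logb_nonneg one_lt_two (by nlinarith))

end MaxOfExponentials

lemma isLittleO_log_one_add_sub_self :
    (fun y : ℝ => log (1 + y) - y) =o[𝓝 0] fun y => y := by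
  have h := hasDerivAt_iff_isLittleO_nhds_zero.mp
    ((hasDerivAt_id (0 : ℝ)).const_add 1 |>.log (by norm_num))
  simpa using h

lemma isLittleO_inv_log_loglog_div_log :
    (fun x : ℝ => (log x)⁻¹) =o[atTop] fun x => log (log x) / log x := by
  have h : (fun _ : ℝ => (1 : ℝ)) =o[atTop] fun x => log (log x) :=
    (isLittleO_one_left_iff ℝ).2
      (tendsto_norm_atTop_atTop.comp (tendsto_log_atTop.comp tendsto_log_atTop))
  simpa [div_eq_mul_inv] using h.mul_isBigO (isBigO_refl (fun x : ℝ => (log x)⁻¹) atTop)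

lemma isLittleO_log_div_self_inv_log :
    (fun x : ℝ => log x / x) =o[atTop] fun x => (log x)⁻¹ := by
  have h := (isLittleO_pow_log_id_atTop (n := 2)).mul_isBigO
    (isBigO_refl (fun x : ℝ => (x * log x)⁻¹) atTop)
  refine h.congr' ?_ ?_
  · filter_upwards [tendsto_log_atTop.eventually_ne_atTop 0] with x hx
    field_simp
  · filter_upwards [eventually_ne_atTop 0, tendsto_log_atTop.eventually_ne_atTop 0] with x hx hlx
    simp only [id]
    field_simp

section Rate

variable {ρ : ℝ}

lemma isLittleO_log_one_add_mul_log_sub_log_mul (hρ : 0 < ρ) :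
    (fun x : ℝ => log (1 + ρ * (log x - log (log x))) - log (ρ * log x) + log (log x) / log x)
      =o[atTop] fun x => log (log x) / log x := by
  set u : ℝ → ℝ := fun x => ρ⁻¹ * (log x)⁻¹ - log (log x) / log x
  have hu : Tendsto u atTop (𝓝 0) := by
    have h1 := (tendsto_inv_atTop_zero.comp tendsto_log_atTop).const_mul ρ⁻¹
    have h2 := isLittleO_log_id_atTop.tendsto_div_nhds_zero.comp tendsto_log_atTop
    simpa [u] using h1.sub h2
  have huO : u =O[atTop] fun x => log (log x) / log x :=
    (isLittleO_inv_log_loglog_div_log.isBigO.const_mul_left ρ⁻¹).sub (isBigO_refl _ _)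
  have hmain := ((isLittleO_log_one_add_sub_self.comp_tendsto hu).trans_isBigO huO).add
    (isLittleO_inv_log_loglog_div_log.const_mul_left ρ⁻¹)
  refine hmain.congr' ?_ EventuallyEq.rfl
  filter_upwards [tendsto_log_atTop.eventually_gt_atTop 0] with x hx
  have hLL : log (log x) ≤ log x - 1 := log_le_sub_one_of_pos hx
  have hnum : 1 + ρ * (log x - log (log x)) ≠ 0 := by nlinarith
  have harg : (1 + ρ * (log x - log (log x))) / (ρ * log x) = 1 + u x := by
    simp only [u]
    field_simp
    ring
  change log (1 + u x) - u x + ρ⁻¹ * (log x)⁻¹ = _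
  rw [← harg, log_div hnum (by positivity)]
  ring

lemma isLittleO_log_one_add_mul_log_sub_log_div_self (hρ : 0 < ρ) :
    (fun x : ℝ => log (1 + ρ * (log x - log (log x))) / x)
      =o[atTop] fun x => log (log x) / log x := by
  refine IsBigO.trans_isLittleO ?_
    (isLittleO_log_div_self_inv_log.trans_isBigO isLittleO_inv_log_loglog_div_log.isBigO)
  refine IsBigO.of_bound ρ ?_
  filter_upwards [eventually_gt_atTop 0, tendsto_log_atTop.eventually_gt_atTop 1] with x hx hlx
  have hLL : log (log x) ≤ log x - 1 := log_le_sub_one_of_pos (by linarith)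
  have hLL0 : 0 < log (log x) := log_pos hlx
  have hpos : 0 < 1 + ρ * (log x - log (log x)) := by nlinarith
  have hlog := log_le_sub_one_of_pos hpos
  rw [norm_div, norm_div, norm_of_nonneg (log_nonneg (by nlinarith)), norm_of_nonneg hx.le,
    norm_of_nonneg (by linarith : (0:ℝ) ≤ log x), mul_div_assoc']
  gcongr
  nlinarith

lemma isLittleO_rateBound_sub (hρ : 0 < ρ) :
    (fun x : ℝ => rateBound ρ x - (logb 2 (ρ * log x) - logb 2 (log x) / log x))
      =o[atTop] fun x => log (log x) / log x :=
  (((isLittleO_log_one_add_mul_log_sub_log_mul hρ).sub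
    (isLittleO_log_one_add_mul_log_sub_log_div_self hρ)).const_mul_left (log 2)⁻¹).congr_left
    fun x => by simp only [rateBound, logb]; ring

end Rate

theorem no_interference_rate_lower_bound_general
    {Ω : Type*} [MeasurableSpace Ω] (P : Measure Ω) [IsProbabilityMeasure P]
    (N : ℕ) (ρ : ℝ) (hρ : 0 < ρ)
    (G : Option (Fin N) × ℕ → Ω → ℝ) (hGmeas : ∀ i, Measurable (G i))
    (hGindep : iIndepFun G P)
    (hGdist : ∀ i, Measure.map (G i) P = expMeasure 1)
    (α : ℕ → Ω → ℝ)
    (hα : ∀ k ω, α k ω = ρ * G (none, k) ω)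
    (αup : ℕ → Ω → ℝ) (hαup : ∀ n ω, αup n ω = maxIcc n (fun k => α k ω)) :
    ∃ h : ℕ → ℝ,
      Tendsto (fun n : ℕ => h n * Real.log n / Real.log (Real.log n)) atTop (nhds 0) ∧
      ∀ᶠ n : ℕ in atTop,
        (∫ ω, Real.logb 2 (1 + αup n ω) ∂P)
          ≥ Real.logb 2 (ρ * Real.log n) - Real.logb 2 (Real.log n) / Real.log n + h n := by
  set h : ℝ → ℝ := fun x => rateBound ρ x - (logb 2 (ρ * log x) - logb 2 (log x) / log x)
  refine ⟨fun n => h n, ?_, ?_⟩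
  · simpa only [Function.comp_def, div_div_eq_mul_div] using
      ((isLittleO_rateBound_sub hρ).tendsto_div_nhds_zero).comp tendsto_natCast_atTop_atTop
  · have hXindep : iIndepFun (fun k => G (none, k)) P :=
      hGindep.precomp (g := fun k => (none, k)) fun _ _ hk => (Prod.ext_iff.1 hk).2
    filter_upwards [eventually_ge_atTop 2] with n hn
    simp only [hαup, hα]
    simpa only [h, ge_iff_le, add_sub_cancel] using
      rateBound_le_integral_logb_one_add_maxIcc (fun _ => hGmeas _) hXindep (fun _ => hGdist _)
        hρ.le hn

/-- Lemma 1, lower bound: in the symmetric model, the no-interference average rate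
satisfies `E[log₂(1+α^up n)] ≥ log₂(ρ log n) - log₂(log n)/log n + o(log(log n)/log n)`. -/
theorem no_interference_rate_lower_bound
    {Ω : Type*} [MeasurableSpace Ω] (P : Measure Ω) [IsProbabilityMeasure P]
    (N : ℕ) (hN : 1 ≤ N) (ρ : ℝ) (hρ : 0 < ρ)
    (G : Option (Fin N) × ℕ → Ω → ℝ) (hGmeas : ∀ i, Measurable (G i))
    (hGindep : iIndepFun G P)
    (hGdist : ∀ i, Measure.map (G i) P = expMeasure 1)
    (α β : ℕ → Ω → ℝ)
    (hα : ∀ k ω, α k ω = ρ * G (none, k) ω)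
    (hβ : ∀ k ω, β k ω = ρ * ∑ j : Fin N, G (some j, k) ω)
    (αup : ℕ → Ω → ℝ) (hαup : ∀ n ω, αup n ω = maxIcc n (fun k => α k ω)) :
    ∃ h : ℕ → ℝ,
      Tendsto (fun n : ℕ => h n * Real.log n / Real.log (Real.log n)) atTop (nhds 0) ∧
      ∀ᶠ n : ℕ in atTop,
        (∫ ω, Real.logb 2 (1 + αup n ω) ∂P)
          ≥ Real.logb 2 (ρ * Real.log n) - Real.logb 2 (Real.log n) / Real.log n + h n :=
  no_interference_rate_lower_bound_general P N ρ hρ G hGmeas hGindep hGdist α hα αup hαup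
end

section
/- (Fréchet limit for the asymmetric signal power) In the asymmetric model, for every t > 0, P( max_{1≤k≤n} α_k ≤ c · Γ(1+2/ε)^{ε/2} · n^{ε/2} · t ) → exp(−t^{−2/ε}) as n → ∞, where Γ denotes the Gamma function (so that Γ(1+2/ε) = E[G_1^{2/ε}]). -/
open MeasureTheory ProbabilityTheory Filter Real

/-! Conditionally on `U`, the event `α ≤ y` is `G ≤ (y / c) U ^ (ε / 2)`, so
`P(α ≤ y) = 1 - ∫₀¹ exp (-(y / c) u ^ (ε / 2)) du`. At the threshold `y = c b n ^ (ε / 2)` with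
`b = Γ(1 + 2/ε) ^ (ε / 2) t`, the substitution `w = n u` turns this into `1 - aₙ / n` with
`aₙ = ∫₀ⁿ exp (-b w ^ (ε / 2)) dw → b ^ (-2/ε) Γ(1 + 2/ε) = t ^ (-2/ε)`. By independence the
distribution function of the maximum is the `n`-th power, and `(1 - aₙ / n) ^ n → exp (-t ^ (-2/ε))`. -/

open Set Topology Measure

theorem maxIcc_le_iff {n : ℕ} (hn : 1 ≤ n) {f : ℕ → ℝ} {y : ℝ} :
    maxIcc n f ≤ y ↔ ∀ k ∈ Finset.Icc 1 n, f k ≤ y := by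
  have : Nonempty (Finset.Icc 1 n) := (Finset.nonempty_Icc.mpr hn).coe_sort
  rw [maxIcc, ciSup_le_iff (finite_range _).bddAbove, Subtype.forall]

theorem ProbabilityTheory.iIndepFun.curry {ι κ Ω 𝓧 : Type*} [MeasurableSpace Ω]
    [MeasurableSpace 𝓧] {P : Measure Ω} {X : ι × κ → Ω → 𝓧} (hX : ∀ p, Measurable (X p))
    (h : iIndepFun X P) : iIndepFun (fun i ω j ↦ X (i, j) ω) P := by
  have := h.isProbabilityMeasure
  have : ∀ p, IsProbabilityMeasure (P.map (X p)) :=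
    fun p ↦ isProbabilityMeasure_map (hX p).aemeasurable
  have hrow : ∀ i, Measurable fun ω j ↦ X (i, j) ω := fun i ↦ measurable_pi_iff.2 fun j ↦ hX _
  rw [iIndepFun_iff_map_fun_eq_infinitePi_map hrow]
  have hrow_law : ∀ i, P.map (fun ω j ↦ X (i, j) ω) = infinitePi fun j ↦ P.map (X (i, j)) :=
    fun i ↦ (h.precomp (Prod.mk_right_injective i)).map_fun_eq_infinitePi_map fun j ↦ hX _
  simp_rw [hrow_law]
  rw [← infinitePi_map_curry (fun i j ↦ P.map (X (i, j))),
    ← h.map_fun_eq_infinitePi_map hX, map_map (by fun_prop) (measurable_pi_iff.2 hX)]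
  rfl

theorem ProbabilityTheory.iIndepFun.comp_column {ι κ Ω 𝓧 β : Type*} [MeasurableSpace Ω]
    [MeasurableSpace 𝓧] [MeasurableSpace β] {P : Measure Ω} {X : ι × κ → Ω → 𝓧}
    (hX : ∀ p, Measurable (X p)) (h : iIndepFun X P) {φ : (ι → 𝓧) → β} (hφ : Measurable φ) :
    iIndepFun (fun k ω ↦ φ fun i ↦ X (i, k) ω) P :=
  ((h.precomp Prod.swap_injective).curry fun p ↦ hX p.swap).comp (fun _ ↦ φ) fun _ ↦ hφ

theorem ProbabilityTheory.iIndepFun.measureReal_biInter_le {ι Ω : Type*} [MeasurableSpace Ω]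
    {P : Measure Ω} {Y : ι → Ω → ℝ} (h : iIndepFun Y P) (s : Finset ι) (y : ℝ) :
    P.real (⋂ k ∈ s, {ω | Y k ω ≤ y}) = ∏ k ∈ s, P.real {ω | Y k ω ≤ y} := by
  simp only [measureReal_def, ← ENNReal.toReal_prod]
  exact congrArg ENNReal.toReal (h.meas_biInter fun k _ ↦ ⟨Iic y, measurableSet_Iic, rfl⟩)

theorem measureReal_maxIcc_le_of_iIndepFun {Ω : Type*} [MeasurableSpace Ω] {P : Measure Ω}
    {Y : ℕ → Ω → ℝ} (h : iIndepFun Y P) {n : ℕ} (hn : 1 ≤ n) {y q : ℝ}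
    (hq : ∀ k, P.real {ω | Y k ω ≤ y} = q) :
    P.real {ω | maxIcc n (Y · ω) ≤ y} = q ^ n := by
  have hevent : {ω | maxIcc n (Y · ω) ≤ y} = ⋂ k ∈ Finset.Icc 1 n, {ω | Y k ω ≤ y} := by
    ext ω
    simp only [mem_ofPred_eq, mem_iInter, maxIcc_le_iff hn]
  rw [hevent, h.measureReal_biInter_le, Finset.prod_congr rfl fun k _ ↦ hq k,
    Finset.prod_const, Nat.card_Icc, Nat.add_sub_cancel]

theorem expMeasure_one_Iic {z : ℝ} (hz : 0 ≤ z) :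
    expMeasure 1 (Iic z) = ENNReal.ofReal (1 - exp (-z)) := by
  have := isProbabilityMeasure_expMeasure one_pos
  rw [← ENNReal.ofReal_toReal (measure_ne_top _ _), ← measureReal_def, ← cdf_eq_real,
    cdf_expMeasure_eq one_pos, if_pos hz, one_mul]

theorem measureReal_mul_le_of_indepFun_expMeasure {Ω : Type*} [MeasurableSpace Ω]
    {P : Measure Ω} [IsProbabilityMeasure P] {U G : Ω → ℝ} (hU : Measurable U)
    (hG : Measurable G) (hUG : IndepFun U G P) (hGlaw : P.map G = expMeasure 1)
    {h : ℝ → ℝ} (hh : Measurable h) (hpos : ∀ᵐ u ∂(P.map U), 0 < h u) {y : ℝ} (hy : 0 ≤ y) :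
    P.real {ω | h (U ω) * G ω ≤ y} = 1 - ∫ u, exp (-(y / h u)) ∂(P.map U) := by
  have := isProbabilityMeasure_map (μ := P) hU.aemeasurable
  have := isProbabilityMeasure_expMeasure one_pos
  have hlaw : P.map (fun ω ↦ (U ω, G ω)) = (P.map U).prod (expMeasure 1) := by
    rw [← hGlaw]
    exact (indepFun_iff_map_prod_eq_prod_map_map hU.aemeasurable hG.aemeasurable).mp hUG
  set S := {p : ℝ × ℝ | h p.1 * p.2 ≤ y}
  have hS : MeasurableSet S := measurableSet_le (by fun_prop) measurable_const
  have hy_div : ∀ᵐ u ∂(P.map U), 0 ≤ y / h u := hpos.mono fun u hu ↦ div_nonneg hy hu.le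
  have hsection : ∀ᵐ u ∂(P.map U),
      expMeasure 1 (Prod.mk u ⁻¹' S) = ENNReal.ofReal (1 - exp (-(y / h u))) := by
    filter_upwards [hpos, hy_div] with u hu hu'
    rw [← expMeasure_one_Iic hu']
    congr 1
    ext g
    exact (le_div_iff₀' hu).symm
  have hexp_le_one : ∀ᵐ u ∂(P.map U), exp (-(y / h u)) ≤ 1 :=
    hy_div.mono fun u hu ↦ exp_le_one_iff.2 (neg_nonpos.2 hu)
  have hmeas : Measurable fun u ↦ exp (-(y / h u)) := (measurable_const.div hh).neg.exp
  have hint : Integrable (fun u ↦ exp (-(y / h u))) (P.map U) :=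
    .of_bound hmeas.aestronglyMeasurable 1 <| hexp_le_one.mono fun u hu ↦ by
      rwa [norm_of_nonneg (exp_pos _).le]
  calc P.real {ω | h (U ω) * G ω ≤ y}
      = ((P.map U).prod (expMeasure 1)).real S := by
        rw [← hlaw, map_measureReal_apply (by fun_prop) hS]; rfl
    _ = ∫ u, (1 - exp (-(y / h u))) ∂(P.map U) := by
        rw [measureReal_def, Measure.prod_apply hS, lintegral_congr_ae hsection,
          integral_eq_lintegral_of_nonneg_ae (hexp_le_one.mono fun u hu ↦ sub_nonneg.2 hu)
            (measurable_const.sub hmeas).aestronglyMeasurable]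
    _ = 1 - ∫ u, exp (-(y / h u)) ∂(P.map U) := by
        rw [integral_sub (integrable_const 1) hint, integral_const, probReal_univ, one_smul]

theorem setIntegral_Ioc_zero_one_comp_mul_left (f : ℝ → ℝ) {x : ℝ} (hx : 0 < x) :
    ∫ u in Ioc 0 1, f (x * u) = x⁻¹ * ∫ w in 0..x, f w := by
  rw [← intervalIntegral.integral_of_le zero_le_one,
    intervalIntegral.integral_comp_mul_left f hx.ne', mul_zero, mul_one, smul_eq_mul]

theorem measureReal_mul_rpow_neg_mul_le {Ω : Type*} [MeasurableSpace Ω]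
    {P : Measure Ω} [IsProbabilityMeasure P] {U G : Ω → ℝ} (hU : Measurable U)
    (hG : Measurable G) (hUG : IndepFun U G P) (hUlaw : P.map U = volume.restrict (Ioc 0 1))
    (hGlaw : P.map G = expMeasure 1) {p b c x : ℝ} (hb : 0 ≤ b) (hc : 0 < c) (hx : 0 < x) :
    P.real {ω | c * U ω ^ (-p) * G ω ≤ c * b * x ^ p}
      = 1 - (∫ w in 0..x, exp (-b * w ^ p)) / x := by
  have hpos : ∀ᵐ u ∂(P.map U), 0 < c * u ^ (-p) := by
    rw [hUlaw]
    filter_upwards [ae_restrict_mem measurableSet_Ioc] with u hu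
    exact mul_pos hc (rpow_pos_of_pos hu.1 _)
  rw [div_eq_inv_mul, measureReal_mul_le_of_indepFun_expMeasure hU hG hUG hGlaw (by fun_prop)
    hpos (by positivity), hUlaw, ← setIntegral_Ioc_zero_one_comp_mul_left _ hx]
  congr 1
  refine setIntegral_congr_fun measurableSet_Ioc fun u hu ↦ ?_
  rw [mul_rpow hx.le hu.1.le, rpow_neg hu.1.le]
  congr 1
  field_simp

theorem rpow_mul_rpow_neg_inv_mul_self {g t p : ℝ} (hg : 0 < g) (ht : 0 ≤ t) (hp : p ≠ 0) :
    (g ^ p * t) ^ (-p⁻¹) * g = t ^ (-p⁻¹) := by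
  rw [mul_rpow (rpow_nonneg hg.le _) ht, ← rpow_mul hg.le, mul_neg, mul_inv_cancel₀ hp,
    rpow_neg_one, mul_right_comm, inv_mul_cancel₀ hg.ne', one_mul]

theorem tendsto_intervalIntegral_exp_neg_mul_rpow {p b : ℝ} (hp : 0 < p) (hb : 0 < b) :
    Tendsto (fun x ↦ ∫ w in 0..x, exp (-b * w ^ p)) atTop
      (𝓝 (b ^ (-p⁻¹) * Gamma (1 + p⁻¹))) := by
  have hint : IntegrableOn (fun w : ℝ ↦ exp (-b * w ^ p)) (Ioi 0) := by
    simpa using integrableOn_rpow_mul_exp_neg_mul_rpow neg_one_lt_zero hp hb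
  have hval := integral_exp_neg_mul_rpow hp hb
  rw [neg_div, one_div, add_comm] at hval
  rw [← hval]
  exact intervalIntegral_tendsto_integral_Ioi 0 hint tendsto_id

theorem tendsto_one_sub_div_pow_exp {a : ℕ → ℝ} {L : ℝ} (ha : Tendsto a atTop (𝓝 L)) :
    Tendsto (fun n : ℕ ↦ (1 - a n / n) ^ n) atTop (𝓝 (exp (-L))) := by
  simp_rw [sub_eq_add_neg, ← neg_div]
  refine Real.tendsto_one_add_pow_exp_of_tendsto (ha.neg.congr' ?_)
  filter_upwards [eventually_ne_atTop 0] with n hn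
  field_simp

theorem asymmetric_signal_frechet_limit_general
    {Ω : Type*} [MeasurableSpace Ω] (P : Measure Ω) [IsProbabilityMeasure P]
    (ε c : ℝ) (hε : 2 < ε) (hc : 0 < c)
    (X : Fin 2 × ℕ → Ω → ℝ) (hXmeas : ∀ i, Measurable (X i))
    (hXindep : iIndepFun X P)
    (U G : ℕ → Ω → ℝ) (hUX : ∀ k, U k = X (0, k)) (hGX : ∀ k, G k = X (1, k))
    (hUdist : ∀ k, Measure.map (U k) P = volume.restrict (Set.Ioc (0 : ℝ) 1))
    (hGdist : ∀ k, Measure.map (G k) P = expMeasure 1)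
    (α : ℕ → Ω → ℝ)
    (hα : ∀ k ω, α k ω = c * U k ω ^ (-(ε / 2)) * G k ω)
    (αup : ℕ → Ω → ℝ) (hαup : ∀ n ω, αup n ω = maxIcc n (fun k => α k ω))
    (t : ℝ) (ht : 0 < t) :
    Tendsto
      (fun n : ℕ =>
        (P {ω | αup n ω
            ≤ c * Real.Gamma (1 + 2 / ε) ^ (ε / 2) * (n : ℝ) ^ (ε / 2) * t}).toReal)
      atTop (nhds (Real.exp (-(t ^ (-(2 / ε)))))) := by
  have hp : 0 < ε / 2 := by linarith
  have hΓ : 0 < Gamma (1 + (ε / 2)⁻¹) := Gamma_pos_of_pos (by positivity)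
  set b := Gamma (1 + (ε / 2)⁻¹) ^ (ε / 2) * t
  have hb : 0 < b := by positivity
  have hlimit := tendsto_intervalIntegral_exp_neg_mul_rpow hp hb
  rw [rpow_mul_rpow_neg_inv_mul_self hΓ ht.le hp.ne', inv_div] at hlimit
  have hU : ∀ k, Measurable (U k) := fun k ↦ hUX k ▸ hXmeas _
  have hG : ∀ k, Measurable (G k) := fun k ↦ hGX k ▸ hXmeas _
  have hUG : ∀ k, IndepFun (U k) (G k) P := fun k ↦ by
    rw [hUX, hGX]; exact hXindep.indepFun (by simp)
  have hα_indep : iIndepFun α P := by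
    convert hXindep.comp_column hXmeas (φ := fun v ↦ c * v 0 ^ (-(ε / 2)) * v 1)
      (by fun_prop) using 1
    ext k ω
    simp [hα, hUX, hGX]
  refine (tendsto_one_sub_div_pow_exp (hlimit.comp tendsto_natCast_atTop_atTop)).congr' ?_
  filter_upwards [eventually_ge_atTop 1] with n hn
  have hy : c * Gamma (1 + 2 / ε) ^ (ε / 2) * n ^ (ε / 2) * t = c * b * n ^ (ε / 2) := by
    simp only [b, inv_div]; ring
  simp_rw [hy, hαup, ← measureReal_def, Function.comp_apply]
  refine (measureReal_maxIcc_le_of_iIndepFun hα_indep hn fun k ↦ ?_).symm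
  simp only [hα]
  exact measureReal_mul_rpow_neg_mul_le (hU k) (hG k) (hUG k) (hUdist k) (hGdist k) hb.le hc
    (by exact_mod_cast hn)

/-- Fréchet limit for the asymmetric signal power: for every `t > 0`,
`P(max_{1≤k≤n} α k ≤ c · Γ(1+2/ε)^(ε/2) · n^(ε/2) · t) → exp (-t^(-2/ε))` as `n → ∞`. -/
theorem asymmetric_signal_frechet_limit
    {Ω : Type*} [MeasurableSpace Ω] (P : Measure Ω) [IsProbabilityMeasure P]
    (ε c : ℝ) (hε : 2 < ε) (hc : 0 < c)
    (X : Fin 2 × ℕ → Ω → ℝ) (hXmeas : ∀ i, Measurable (X i))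
    (hXindep : iIndepFun X P)
    (U G : ℕ → Ω → ℝ) (hUX : ∀ k, U k = X (0, k)) (hGX : ∀ k, G k = X (1, k))
    (hUdist : ∀ k, Measure.map (U k) P = volume.restrict (Set.Ioc (0 : ℝ) 1))
    (hUmem : ∀ k ω, U k ω ∈ Set.Ioc (0 : ℝ) 1)
    (hGdist : ∀ k, Measure.map (G k) P = expMeasure 1)
    (α : ℕ → Ω → ℝ)
    (hα : ∀ k ω, α k ω = c * U k ω ^ (-(ε / 2)) * G k ω)
    (αup : ℕ → Ω → ℝ) (hαup : ∀ n ω, αup n ω = maxIcc n (fun k => α k ω))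
    (t : ℝ) (ht : 0 < t) :
    Tendsto
      (fun n : ℕ =>
        (P {ω | αup n ω
            ≤ c * Real.Gamma (1 + 2 / ε) ^ (ε / 2) * (n : ℝ) ^ (ε / 2) * t}).toReal)
      atTop (nhds (Real.exp (-(t ^ (-(2 / ε)))))) :=
  asymmetric_signal_frechet_limit_general P ε c hε hc X hXmeas hXindep U G hUX hGX hUdist hGdist α
    hα αup hαup t ht
end
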